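/- arXiv:1010.3089 — 2 statements merged into one kernel-verified Lean document; each statement's English description precedes it below -/
import Mathlib

section
/- Let X = ℓ² and K = {x ∈ ℓ² : ‖x‖ ≤ 1}. Define T(x₁, x₂, …) = (0, x₁⁴, x₂⁴, …) and I(x₁, x₂, …) = (0, x₁², x₂², …). Then ‖Tx‖ ≤ ‖Ix‖ for every x ∈ K (so T is quasi I-nonexpansive with respect to the common fixed point 0), but T is not I-nonexpansive: for x₀ = (1, 0, 0, …) and y₀ = (1/2, 0, 0, …) one has ‖Tx₀ − Ty₀‖ = 15/16 > 3/4 = ‖Ix₀ − Iy₀‖. -/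
-- helper: norm of an lp 2 element supported at index 1
lemma lp_norm_eq_of_single (f : lp (fun _ : ℕ => ℝ) 2) (c : ℝ) (hc : 0 ≤ c)
    (h1 : (f : ℕ → ℝ) 1 = c) (h0 : ∀ n, n ≠ 1 → (f : ℕ → ℝ) n = 0) : ‖f‖ = c := by
  have hp : (0:ℝ) < (2 : ENNReal).toReal := by norm_num
  have hs := lp.hasSum_norm hp f
  have hs2 : HasSum (fun n => ‖(f : ℕ → ℝ) n‖ ^ (2:ENNReal).toReal) (c ^ (2:ENNReal).toReal) := by
    have := hasSum_single (f := fun n => ‖(f : ℕ → ℝ) n‖ ^ (2:ENNReal).toReal) 1 (by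
      intro j hj
      simp only [h0 j hj]
      simp [Real.zero_rpow hp.ne'])
    simpa [h1, Real.norm_of_nonneg hc] using this
  have := hs.unique hs2
  have h2 : ‖f‖ ^ (2:ℝ) = c ^ (2:ℝ) := by simpa using this
  have := Real.rpow_left_injOn (by norm_num : (2:ℝ) ≠ 0) (Set.mem_setOf.mpr (lp.norm_nonneg' f)) hc h2
  exact this

/-- In `ℓ²`, with `T(x₁,x₂,…) = (0,x₁⁴,x₂⁴,…)` and `I(x₁,x₂,…) = (0,x₁²,x₂²,…)`:
`‖Tx‖ ≤ ‖Ix‖` on the closed unit ball (quasi `I`-nonexpansiveness w.r.t. the common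
fixed point `0`), but `T` is not `I`-nonexpansive: for `x₀ = (1,0,…)`, `y₀ = (1/2,0,…)`,
`‖Tx₀ − Ty₀‖ = 15/16 > 3/4 = ‖Ix₀ − Iy₀‖`. -/
theorem stmt_2
    (Tmap Imap : lp (fun _ : ℕ => ℝ) 2 → lp (fun _ : ℕ => ℝ) 2)
    (hT : ∀ x : lp (fun _ : ℕ => ℝ) 2,
      (Tmap x : ℕ → ℝ) 0 = 0 ∧ ∀ n : ℕ, (Tmap x : ℕ → ℝ) (n + 1) = ((x : ℕ → ℝ) n) ^ 4)
    (hI : ∀ x : lp (fun _ : ℕ => ℝ) 2,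
      (Imap x : ℕ → ℝ) 0 = 0 ∧ ∀ n : ℕ, (Imap x : ℕ → ℝ) (n + 1) = ((x : ℕ → ℝ) n) ^ 2)
    (x0 y0 : lp (fun _ : ℕ => ℝ) 2)
    (hx0 : (x0 : ℕ → ℝ) 0 = 1 ∧ ∀ n : ℕ, (x0 : ℕ → ℝ) (n + 1) = 0)
    (hy0 : (y0 : ℕ → ℝ) 0 = 1 / 2 ∧ ∀ n : ℕ, (y0 : ℕ → ℝ) (n + 1) = 0) :
    (∀ x : lp (fun _ : ℕ => ℝ) 2, ‖x‖ ≤ 1 → ‖Tmap x‖ ≤ ‖Imap x‖) ∧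
    ‖Tmap x0 - Tmap y0‖ = 15 / 16 ∧ ‖Imap x0 - Imap y0‖ = 3 / 4 ∧
    ¬ ‖Tmap x0 - Tmap y0‖ ≤ ‖Imap x0 - Imap y0‖ := by
  have hp : (0:ℝ) < (2 : ENNReal).toReal := by norm_num
  have hTn : ‖Tmap x0 - Tmap y0‖ = 15 / 16 := by
    refine lp_norm_eq_of_single _ _ (by norm_num) ?_ ?_
    · rw [lp.coeFn_sub]
      simp only [Pi.sub_apply, (hT x0).2 0, (hT y0).2 0, hx0.1, hy0.1]
      norm_num
    · intro n hn
      rw [lp.coeFn_sub]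
      rcases n with _ | m
      · simp [(hT x0).1, (hT y0).1]
      · rcases m with _ | k
        · exact absurd rfl hn
        · simp [(hT x0).2 (k+1), (hT y0).2 (k+1), hx0.2 k, hy0.2 k]
  have hIn : ‖Imap x0 - Imap y0‖ = 3 / 4 := by
    refine lp_norm_eq_of_single _ _ (by norm_num) ?_ ?_
    · rw [lp.coeFn_sub]
      simp only [Pi.sub_apply, (hI x0).2 0, (hI y0).2 0, hx0.1, hy0.1]
      norm_num
    · intro n hn
      rw [lp.coeFn_sub]
      rcases n with _ | m
      · simp [(hI x0).1, (hI y0).1]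
      · rcases m with _ | k
        · exact absurd rfl hn
        · simp [(hI x0).2 (k+1), (hI y0).2 (k+1), hx0.2 k, hy0.2 k]
  refine ⟨?_, hTn, hIn, by rw [hTn, hIn]; norm_num⟩
  · intro x hx
    have key : ∀ n, ‖(Tmap x : ℕ → ℝ) n‖ ≤ ‖(Imap x : ℕ → ℝ) n‖ := by
      intro n
      rcases n with _ | m
      · rw [(hT x).1, (hI x).1]
      · rw [(hT x).2 m, (hI x).2 m]
        have h1 : ‖(x : ℕ → ℝ) m‖ ≤ 1 :=
          (lp.norm_apply_le_norm (by norm_num) x m).trans hx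
        have h0 : (0:ℝ) ≤ ‖(x : ℕ → ℝ) m‖ := norm_nonneg _
        calc ‖(x : ℕ → ℝ) m ^ 4‖ = ‖(x : ℕ → ℝ) m‖ ^ 4 := by
              rw [norm_pow]
          _ ≤ ‖(x : ℕ → ℝ) m‖ ^ 2 := pow_le_pow_of_le_one h0 h1 (by norm_num)
          _ = ‖(x : ℕ → ℝ) m ^ 2‖ := by rw [norm_pow]
    have hle : ‖Tmap x‖ ^ (2:ENNReal).toReal ≤ ‖Imap x‖ ^ (2:ENNReal).toReal :=
      hasSum_le (fun n => Real.rpow_le_rpow (norm_nonneg _) (key n) hp.le)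
        (lp.hasSum_norm hp (Tmap x)) (lp.hasSum_norm hp (Imap x))
    have h2 : ‖Tmap x‖ ^ (2:ℕ) ≤ ‖Imap x‖ ^ (2:ℕ) := by
      simpa [ENNReal.toReal_ofNat, Real.rpow_natCast] using hle
    exact (pow_le_pow_iff_left₀ (lp.norm_nonneg' _) (lp.norm_nonneg' _) two_ne_zero).mp h2
end

section
/- In a normed space, the inequality liminf_n ‖x_n − x‖ < liminf_n ‖x_n − y‖ for all y ≠ x (whenever x_n ⇀ x weakly), i.e. the Opial condition, is equivalent to the condition limsup_n ‖x_n − x‖ < limsup_n ‖x_n − y‖ for all y ≠ x whenever x_n ⇀ x weakly. -/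
open Filter

/-- A bounded real sequence has a subsequence tending to its limsup. -/
lemma exists_subseq_tendsto_limsup {u : ℕ → ℝ} {C : ℝ} (hC : ∀ n, |u n| ≤ C) :
    ∃ φ : ℕ → ℕ, StrictMono φ ∧
      Tendsto (fun k => u (φ k)) atTop (nhds (limsup u atTop)) := by
  set L := limsup u atTop with hL
  have hbdd : atTop.IsBoundedUnder (· ≤ ·) u :=
    isBoundedUnder_of ⟨C, fun n => (abs_le.1 (hC n)).2⟩
  have hbdd' : atTop.IsBoundedUnder (· ≥ ·) u :=
    isBoundedUnder_of ⟨-C, fun n => (abs_le.1 (hC n)).1⟩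
  have hcob : atTop.IsCoboundedUnder (· ≤ ·) u := hbdd'.isCoboundedUnder_le
  have key : ∀ m : ℕ, ∃ᶠ k in atTop, |u k - L| < 1 / (m + 1) := by
    intro m
    have hm : (0 : ℝ) < 1 / (m + 1) := by positivity
    have h1 : ∃ᶠ k in atTop, L - 1 / (m + 1) < u k :=
      frequently_lt_of_lt_limsup hcob (by linarith)
    have h2 : ∀ᶠ k in atTop, u k < L + 1 / (m + 1) :=
      eventually_lt_of_limsup_lt (by linarith) hbdd
    exact (h1.and_eventually h2).mono fun k ⟨hk1, hk2⟩ => abs_sub_lt_iff.2 ⟨by linarith, by linarith⟩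
  obtain ⟨φ, hφ, hφ2⟩ := extraction_forall_of_frequently key
  refine ⟨φ, hφ, ?_⟩
  have h0 : Tendsto (fun k => u (φ k) - L) atTop (nhds 0) := by
    have : Tendsto (fun k : ℕ => 1 / ((k : ℝ) + 1)) atTop (nhds 0) :=
      tendsto_one_div_add_atTop_nhds_zero_nat
    exact squeeze_zero_norm (fun k => (hφ2 k).le) this
  simpa using h0.add_const L

/-- A bounded real sequence has a subsequence tending to its liminf. -/
lemma exists_subseq_tendsto_liminf {u : ℕ → ℝ} {C : ℝ} (hC : ∀ n, |u n| ≤ C) :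
    ∃ φ : ℕ → ℕ, StrictMono φ ∧
      Tendsto (fun k => u (φ k)) atTop (nhds (liminf u atTop)) := by
  set L := liminf u atTop with hL
  have hbdd : atTop.IsBoundedUnder (· ≤ ·) u :=
    isBoundedUnder_of ⟨C, fun n => (abs_le.1 (hC n)).2⟩
  have hbdd' : atTop.IsBoundedUnder (· ≥ ·) u :=
    isBoundedUnder_of ⟨-C, fun n => (abs_le.1 (hC n)).1⟩
  have hcob : atTop.IsCoboundedUnder (· ≥ ·) u := hbdd.isCoboundedUnder_ge
  have key : ∀ m : ℕ, ∃ᶠ k in atTop, |u k - L| < 1 / (m + 1) := by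
    intro m
    have hm : (0 : ℝ) < 1 / (m + 1) := by positivity
    have h1 : ∃ᶠ k in atTop, u k < L + 1 / (m + 1) :=
      frequently_lt_of_liminf_lt hcob (by linarith)
    have h2 : ∀ᶠ k in atTop, L - 1 / (m + 1) < u k :=
      eventually_lt_of_lt_liminf (by linarith) hbdd'
    exact (h1.and_eventually h2).mono fun k ⟨hk1, hk2⟩ => abs_sub_lt_iff.2 ⟨by linarith, by linarith⟩
  obtain ⟨φ, hφ, hφ2⟩ := extraction_forall_of_frequently key
  refine ⟨φ, hφ, ?_⟩
  have h0 : Tendsto (fun k => u (φ k) - L) atTop (nhds 0) := by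
    have : Tendsto (fun k : ℕ => 1 / ((k : ℝ) + 1)) atTop (nhds 0) :=
      tendsto_one_div_add_atTop_nhds_zero_nat
    exact squeeze_zero_norm (fun k => (hφ2 k).le) this
  simpa using h0.add_const L

/-- A weakly convergent sequence in a Banach space is norm-bounded. -/
lemma weak_bounded {X : Type*} [NormedAddCommGroup X] [NormedSpace ℝ X] [CompleteSpace X]
    (x : ℕ → X) (p : X)
    (hw : ∀ f : X →L[ℝ] ℝ, Tendsto (fun n => f (x n)) atTop (nhds (f p))) :
    ∃ C, ∀ n, ‖x n‖ ≤ C := by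
  set g : ℕ → StrongDual ℝ X →L[ℝ] ℝ :=
    fun n => NormedSpace.inclusionInDoubleDual ℝ X (x n) with hg
  have h : ∀ f : StrongDual ℝ X, ∃ C, ∀ n, ‖g n f‖ ≤ C := by
    intro f
    have hb : BddAbove (Set.range fun n => ‖f (x n)‖) := (hw f).norm.bddAbove_range
    obtain ⟨C, hC⟩ := hb
    exact ⟨C, fun n => hC (Set.mem_range_self n)⟩
  obtain ⟨C, hC⟩ := banach_steinhaus h
  refine ⟨C, fun n => ?_⟩
  have hnorm : ‖g n‖ = ‖x n‖ :=
    (NormedSpace.inclusionInDoubleDualLi ℝ (E := X)).norm_map (x n)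
  exact hnorm ▸ hC n

lemma abs_norm_sub_le {X : Type*} [NormedAddCommGroup X] {x : X} {q : X} {C : ℝ}
    (h : ‖x‖ ≤ C) : |‖x - q‖| ≤ C + ‖q‖ := by
  rw [abs_of_nonneg (norm_nonneg _)]
  calc ‖x - q‖ ≤ ‖x‖ + ‖q‖ := norm_sub_le _ _
    _ ≤ C + ‖q‖ := by linarith

/-- The Opial condition (liminf form) is equivalent to the limsup form: for every
weakly convergent sequence `x_n ⇀ x`,
`liminf ‖x_n − x‖ < liminf ‖x_n − y‖` for all `y ≠ x`
holds iff `limsup ‖x_n − x‖ < limsup ‖x_n − y‖` for all `y ≠ x`. -/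
theorem stmt_9 {X : Type*} [NormedAddCommGroup X] [NormedSpace ℝ X] [CompleteSpace X] :
    (∀ (x : ℕ → X) (p : X),
        (∀ f : X →L[ℝ] ℝ, Tendsto (fun n => f (x n)) atTop (nhds (f p))) →
        ∀ q : X, q ≠ p →
          liminf (fun n => ‖x n - p‖) atTop < liminf (fun n => ‖x n - q‖) atTop) ↔
    (∀ (x : ℕ → X) (p : X),
        (∀ f : X →L[ℝ] ℝ, Tendsto (fun n => f (x n)) atTop (nhds (f p))) →
        ∀ q : X, q ≠ p →
          limsup (fun n => ‖x n - p‖) atTop < limsup (fun n => ‖x n - q‖) atTop) := by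
  constructor
  · intro H x p hw q hq
    obtain ⟨C, hC⟩ := weak_bounded x p hw
    have hup : ∀ n, |‖x n - p‖| ≤ C + ‖p‖ := fun n => abs_norm_sub_le (hC n)
    have huq : ∀ n, |‖x n - q‖| ≤ C + ‖q‖ := fun n => abs_norm_sub_le (hC n)
    obtain ⟨φ, hφ, hT⟩ := exists_subseq_tendsto_limsup hup
    have hφtop : Tendsto φ atTop atTop := hφ.tendsto_atTop
    have hw' : ∀ f : X →L[ℝ] ℝ,
        Tendsto (fun k => f (x (φ k))) atTop (nhds (f p)) :=
      fun f => (hw f).comp hφtop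
    have hkey := H (fun k => x (φ k)) p hw' q hq
    have h1 : liminf (fun k => ‖x (φ k) - p‖) atTop = limsup (fun n => ‖x n - p‖) atTop :=
      hT.liminf_eq
    have h2 : liminf (fun k => ‖x (φ k) - q‖) atTop ≤ limsup (fun k => ‖x (φ k) - q‖) atTop :=
      liminf_le_limsup
        (isBoundedUnder_of ⟨C + ‖q‖, fun k => (abs_le.1 (huq (φ k))).2⟩)
        (isBoundedUnder_of ⟨-(C + ‖q‖), fun k => (abs_le.1 (huq (φ k))).1⟩)
    have h3 : limsup (fun k => ‖x (φ k) - q‖) atTop ≤ limsup (fun n => ‖x n - q‖) atTop := by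
      rw [show (fun k => ‖x (φ k) - q‖) = (fun n => ‖x n - q‖) ∘ φ from rfl,
        limsup_comp]
      exact limsup_le_limsup_of_le (map_le_iff_le_comap.2 hφtop.le_comap)
        ((isBoundedUnder_of (r := (· ≥ ·)) (f := map φ atTop)
          (u := fun n => ‖x n - q‖) ⟨-(C + ‖q‖), fun n => (abs_le.1 (huq n)).1⟩).isCoboundedUnder_le)
        (isBoundedUnder_of ⟨C + ‖q‖, fun n => (abs_le.1 (huq n)).2⟩)
    calc limsup (fun n => ‖x n - p‖) atTop
        = liminf (fun k => ‖x (φ k) - p‖) atTop := h1.symm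
      _ < liminf (fun k => ‖x (φ k) - q‖) atTop := hkey
      _ ≤ limsup (fun k => ‖x (φ k) - q‖) atTop := h2
      _ ≤ limsup (fun n => ‖x n - q‖) atTop := h3
  · intro H x p hw q hq
    obtain ⟨C, hC⟩ := weak_bounded x p hw
    have hup : ∀ n, |‖x n - p‖| ≤ C + ‖p‖ := fun n => abs_norm_sub_le (hC n)
    have huq : ∀ n, |‖x n - q‖| ≤ C + ‖q‖ := fun n => abs_norm_sub_le (hC n)
    obtain ⟨φ, hφ, hT⟩ := exists_subseq_tendsto_liminf huq
    have hφtop : Tendsto φ atTop atTop := hφ.tendsto_atTop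
    have hw' : ∀ f : X →L[ℝ] ℝ,
        Tendsto (fun k => f (x (φ k))) atTop (nhds (f p)) :=
      fun f => (hw f).comp hφtop
    have hkey := H (fun k => x (φ k)) p hw' q hq
    have h1 : limsup (fun k => ‖x (φ k) - q‖) atTop = liminf (fun n => ‖x n - q‖) atTop :=
      hT.limsup_eq
    have h2 : liminf (fun k => ‖x (φ k) - p‖) atTop ≤ limsup (fun k => ‖x (φ k) - p‖) atTop :=
      liminf_le_limsup
        (isBoundedUnder_of ⟨C + ‖p‖, fun k => (abs_le.1 (hup (φ k))).2⟩)
        (isBoundedUnder_of ⟨-(C + ‖p‖), fun k => (abs_le.1 (hup (φ k))).1⟩)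
    have h3 : liminf (fun n => ‖x n - p‖) atTop ≤ liminf (fun k => ‖x (φ k) - p‖) atTop := by
      rw [show (fun k => ‖x (φ k) - p‖) = (fun n => ‖x n - p‖) ∘ φ from rfl,
        liminf_comp]
      exact liminf_le_liminf_of_le (map_le_iff_le_comap.2 hφtop.le_comap)
        (isBoundedUnder_of ⟨-(C + ‖p‖), fun n => (abs_le.1 (hup n)).1⟩)
        ((isBoundedUnder_of (r := (· ≤ ·)) (f := map φ atTop)
          (u := fun n => ‖x n - p‖) ⟨C + ‖p‖, fun n => (abs_le.1 (hup n)).2⟩).isCoboundedUnder_ge)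
    calc liminf (fun n => ‖x n - p‖) atTop
        ≤ liminf (fun k => ‖x (φ k) - p‖) atTop := h3
      _ ≤ limsup (fun k => ‖x (φ k) - p‖) atTop := h2
      _ < limsup (fun k => ‖x (φ k) - q‖) atTop := hkey
      _ ≤ liminf (fun n => ‖x n - q‖) atTop := h1.le
end
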